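/- arXiv:1407.2955 — 3 statements merged into one kernel-verified Lean document; each statement's English description precedes it below -/
import Mathlib

section
/- Let A = (id_s | A₁) and V be as above, S ⊆ ℝⁿ a subspace. If for every κ̂ ∈ ℝ^{r-s}_{>0} the map g_{κ̂} is S-injective, then for every κ ∈ ℝʳ_{>0} the map f_κ(x) = A(κ ∘ x^V) does not have multiple S-zeros. -/
/-- The vector of generalised monomials `x^V` given by the columns of `V`. -/
noncomputable def monos {n : ℕ} {r : Type*} (V : Matrix (Fin n) r ℝ) (x : Fin n → ℝ) :
    r → ℝ :=
  fun j => ∏ i, x i ^ V i j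

/-- The map `g_κ̂` obtained from `A = (id_s | A₁)` by eliminating `κ₁,…,κ_s`. -/
noncomputable def gmap {s t n : ℕ} (A₁ : Matrix (Fin s) (Fin t) ℝ)
    (V : Matrix (Fin n) (Fin s ⊕ Fin t) ℝ) (κh : Fin t → ℝ) (x : Fin n → ℝ) :
    Fin s → ℝ :=
  fun i => - ((∏ l, x l ^ (-(V l (Sum.inl i)))) *
      ∑ j, A₁ i j * (κh j * monos V x (Sum.inr j)))

section Monomials

variable {n : ℕ} {r : Type*} (V : Matrix (Fin n) r ℝ) {x : Fin n → ℝ}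

lemma monos_pos (hx : ∀ i, 0 < x i) (j : r) : 0 < monos V x j :=
  Finset.prod_pos fun i _ => Real.rpow_pos_of_pos (hx i) _

lemma prod_rpow_neg_eq_inv_monos (hx : ∀ i, 0 < x i) (j : r) :
    ∏ i, x i ^ (-(V i j)) = (monos V x j)⁻¹ := by
  rw [monos, ← Finset.prod_inv_distrib]
  exact Finset.prod_congr rfl fun i _ => Real.rpow_neg (hx i).le _

end Monomials

lemma fromCols_one_mulVec_eq_zero_iff_eq_gmap {s t n : ℕ} (A₁ : Matrix (Fin s) (Fin t) ℝ)
    (V : Matrix (Fin n) (Fin s ⊕ Fin t) ℝ) (κ : Fin s ⊕ Fin t → ℝ) {x : Fin n → ℝ}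
    (hx : ∀ i, 0 < x i) :
    (Matrix.fromCols (1 : Matrix (Fin s) (Fin s) ℝ) A₁).mulVec
        (fun j => κ j * monos V x j) = 0 ↔
      κ ∘ Sum.inl = gmap A₁ V (κ ∘ Sum.inr) x := by
  rw [Matrix.fromCols_mulVec, Matrix.one_mulVec, funext_iff, funext_iff]
  refine forall_congr' fun i => ?_
  have hm := (monos_pos V hx (Sum.inl i)).ne'
  simp only [gmap, prod_rpow_neg_eq_inv_monos V hx, Pi.add_apply, Pi.zero_apply,
    Function.comp_apply, Matrix.mulVec, dotProduct]
  constructor <;> intro h <;> field_simp at h ⊢ <;> linarith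

theorem stmt_7 {s t n : ℕ} (A₁ : Matrix (Fin s) (Fin t) ℝ)
    (V : Matrix (Fin n) (Fin s ⊕ Fin t) ℝ) (S : Submodule ℝ (Fin n → ℝ))
    (hg : ∀ κh : Fin t → ℝ, (∀ j, 0 < κh j) →
      ∀ x y : Fin n → ℝ, (∀ i, 0 < x i) → (∀ i, 0 < y i) → x ≠ y → x - y ∈ S →
        gmap A₁ V κh x ≠ gmap A₁ V κh y) :
    ∀ κ : Fin s ⊕ Fin t → ℝ, (∀ j, 0 < κ j) →
      ¬ ∃ x y : Fin n → ℝ, (∀ i, 0 < x i) ∧ (∀ i, 0 < y i) ∧ x ≠ y ∧ x - y ∈ S ∧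
        (Matrix.fromCols (1 : Matrix (Fin s) (Fin s) ℝ) A₁).mulVec
          (fun j => κ j * monos V x j) = 0 ∧
        (Matrix.fromCols (1 : Matrix (Fin s) (Fin s) ℝ) A₁).mulVec
          (fun j => κ j * monos V y j) = 0 := by
  rintro κ hκ ⟨x, y, hx, hy, hxy, hS, hfx, hfy⟩
  have hgx := (fromCols_one_mulVec_eq_zero_iff_eq_gmap A₁ V κ hx).mp hfx
  have hgy := (fromCols_one_mulVec_eq_zero_iff_eq_gmap A₁ V κ hy).mp hfy
  exact hg (κ ∘ Sum.inr) (fun j => hκ _) x y hx hy hxy hS (hgx.symm.trans hgy)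
end

section
/- Let A = (id_s | A₁) ∈ ℝ^{s×r} and V ∈ ℝ^{n×r}, and S ⊆ ℝⁿ a subspace. Suppose there exist κ̂ ∈ ℝ^{r-s}_{>0} and distinct x, y ∈ ℝⁿ_{>0} with x - y ∈ S such that g_{κ̂}(x) = g_{κ̂}(y) and all coordinates of g_{κ̂}(x) are strictly positive. Then there exists κ ∈ ℝʳ_{>0} such that f_κ has multiple S-zeros, i.e., f_κ(x) = f_κ(y) = 0. -/
/-!
Choosing `(κ₁,…,κ_s) = g_κ̂(z)` makes the first block `κ_i z^{v^i}` of `κ ∘ z^V` equal to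
`-(A₁ (κ̂ ∘ z^{V₁}))_i`, since `z^{-v^i} z^{v^i} = 1` for positive `z`; hence `f_κ(z) = 0`.
The equation `g_κ̂(x) = g_κ̂(y)` says that one and the same `κ` serves for `x` and `y`,
and `g_κ̂(x) > 0` makes that `κ` positive.
-/

lemma prod_rpow_neg_mul_monos {n : ℕ} {r : Type*} (V : Matrix (Fin n) r ℝ)
    {z : Fin n → ℝ} (hz : ∀ l, 0 < z l) (j : r) :
    (∏ l, z l ^ (-V l j)) * monos V z j = 1 := by
  rw [monos, ← Finset.prod_mul_distrib]
  refine Finset.prod_eq_one fun l _ => ?_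
  rw [← Real.rpow_add (hz l), neg_add_cancel, Real.rpow_zero]

lemma gmap_mul_monos_inl {s t n : ℕ} (A₁ : Matrix (Fin s) (Fin t) ℝ)
    (V : Matrix (Fin n) (Fin s ⊕ Fin t) ℝ) (κh : Fin t → ℝ)
    {z : Fin n → ℝ} (hz : ∀ l, 0 < z l) (i : Fin s) :
    gmap A₁ V κh z i * monos V z (Sum.inl i) =
      -(A₁.mulVec fun j => κh j * monos V z (Sum.inr j)) i := by
  rw [gmap, neg_mul, mul_right_comm, prod_rpow_neg_mul_monos V hz, one_mul]
  rfl

theorem fromCols_one_mulVec_gmap_eq_zero {s t n : ℕ} (A₁ : Matrix (Fin s) (Fin t) ℝ)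
    (V : Matrix (Fin n) (Fin s ⊕ Fin t) ℝ) (κh : Fin t → ℝ)
    {z : Fin n → ℝ} (hz : ∀ l, 0 < z l) :
    (Matrix.fromCols (1 : Matrix (Fin s) (Fin s) ℝ) A₁).mulVec
      (fun j => Sum.elim (gmap A₁ V κh z) κh j * monos V z j) = 0 := by
  rw [Matrix.fromCols_mulVec, Matrix.one_mulVec]
  ext i
  simp [gmap_mul_monos_inl A₁ V κh hz i, Function.comp_def]

theorem stmt_8_general {s t n : ℕ} (A₁ : Matrix (Fin s) (Fin t) ℝ)
    (V : Matrix (Fin n) (Fin s ⊕ Fin t) ℝ)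
    (κh : Fin t → ℝ) (hκh : ∀ j, 0 < κh j)
    (x y : Fin n → ℝ) (hx : ∀ i, 0 < x i) (hy : ∀ i, 0 < y i)
    (hgeq : gmap A₁ V κh x = gmap A₁ V κh y)
    (hpos : ∀ i, 0 < gmap A₁ V κh x i) :
    ∃ κ : Fin s ⊕ Fin t → ℝ, (∀ j, 0 < κ j) ∧
      (Matrix.fromCols (1 : Matrix (Fin s) (Fin s) ℝ) A₁).mulVec
        (fun j => κ j * monos V x j) = 0 ∧
      (Matrix.fromCols (1 : Matrix (Fin s) (Fin s) ℝ) A₁).mulVec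
        (fun j => κ j * monos V y j) = 0 := by
  refine ⟨Sum.elim (gmap A₁ V κh x) κh, ?_, fromCols_one_mulVec_gmap_eq_zero A₁ V κh hx, ?_⟩
  · rintro (i | j)
    exacts [hpos i, hκh j]
  · rw [hgeq]
    exact fromCols_one_mulVec_gmap_eq_zero A₁ V κh hy

theorem stmt_8 {s t n : ℕ} (A₁ : Matrix (Fin s) (Fin t) ℝ)
    (V : Matrix (Fin n) (Fin s ⊕ Fin t) ℝ) (S : Submodule ℝ (Fin n → ℝ))
    (κh : Fin t → ℝ) (hκh : ∀ j, 0 < κh j)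
    (x y : Fin n → ℝ) (hx : ∀ i, 0 < x i) (hy : ∀ i, 0 < y i) (hxy : x ≠ y)
    (hS : x - y ∈ S) (hgeq : gmap A₁ V κh x = gmap A₁ V κh y)
    (hpos : ∀ i, 0 < gmap A₁ V κh x i) :
    ∃ κ : Fin s ⊕ Fin t → ℝ, (∀ j, 0 < κ j) ∧
      (Matrix.fromCols (1 : Matrix (Fin s) (Fin s) ℝ) A₁).mulVec
        (fun j => κ j * monos V x j) = 0 ∧
      (Matrix.fromCols (1 : Matrix (Fin s) (Fin s) ℝ) A₁).mulVec
        (fun j => κ j * monos V y j) = 0 :=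
  stmt_8_general A₁ V κh hκh x y hx hy hgeq hpos
end

section
/- Let A' = [[1,0,0],[0,1,1]] and V' the 4×3 matrix with columns (-1,0,0,1)ᵗ, (1,-1,-1,1)ᵗ, (0,0,-1,1)ᵗ, and S = span{(1,-1,0,0),(0,0,1,-1)} ⊆ ℝ⁴. Then for every η ∈ ℝ³_{>0}, the map x ↦ A'(η ∘ x^{V'}) = (η₁x₁⁻¹x₄, η₂x₁x₂⁻¹x₃⁻¹x₄ + η₃x₃⁻¹x₄) is S-injective: for all distinct x, y ∈ ℝ⁴_{>0} with x - y ∈ S, the images differ. -/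
/-!
Along `S` the coordinates `x₁, x₄` move opposite to `x₂, x₃`. Equality of the first components
`η₁ x₄ / x₁` forces `x₁ - y₁` and `x₄ - y₄` to have the same sign, so `x - y` has sign pattern
`(+, -, -, +)`, `(-, +, +, -)` or vanishes. The second component
`η₂ x₁ x₄ / (x₂ x₃) + η₃ x₄ / x₃` is strictly increasing in `x₁, x₄` and strictly decreasing in
`x₂, x₃`, so in the first two cases it separates `x` from `y`.
-/

open Submodule

/-- The second component of `x ↦ A' (η ∘ x ^ V')`. -/
noncomputable def secondComponent (η : Fin 3 → ℝ) (x : Fin 4 → ℝ) : ℝ :=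
  η 1 * x 0 * (x 1)⁻¹ * (x 2)⁻¹ * x 3 + η 2 * (x 2)⁻¹ * x 3

lemma mem_span_balanced_pairs_iff (v : Fin 4 → ℝ) :
    v ∈ span ℝ ({![(1:ℝ), -1, 0, 0], ![0, 0, 1, -1]} : Set (Fin 4 → ℝ)) ↔
      v 1 = -v 0 ∧ v 3 = -v 2 := by
  rw [mem_span_pair]
  constructor
  · rintro ⟨a, b, rfl⟩
    simp
  · rintro ⟨h1, h3⟩
    refine ⟨v 0, v 2, ?_⟩
    ext i
    fin_cases i <;> simp [h1, h3]

lemma secondComponent_lt_of_signs {η : Fin 3 → ℝ} (hη : ∀ j, 0 < η j) {x y : Fin 4 → ℝ}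
    (hx : ∀ i, 0 < x i) (hy : ∀ i, 0 < y i)
    (h0 : y 0 < x 0) (h1 : x 1 < y 1) (h2 : x 2 < y 2) (h3 : y 3 < x 3) :
    secondComponent η y < secondComponent η x := by
  have := hη 1; have := hη 2; have := hx 1; have := hx 2
  have := hy 0; have := hy 1; have := hy 2; have := hy 3
  unfold secondComponent
  gcongr

lemma sign_pattern_of_lt {x y : Fin 4 → ℝ} (hx : ∀ i, 0 < x i) (hy : ∀ i, 0 < y i)
    (hS : x 1 - y 1 = -(x 0 - y 0) ∧ x 3 - y 3 = -(x 2 - y 2))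
    (hratio : (x 0)⁻¹ * x 3 = (y 0)⁻¹ * y 3) (h0 : y 0 < x 0) :
    x 1 < y 1 ∧ x 2 < y 2 ∧ y 3 < x 3 := by
  have hcross : x 3 * y 0 = y 3 * x 0 := by
    field_simp [(hx 0).ne', (hy 0).ne'] at hratio
    linarith
  have h3 : y 3 < x 3 := by nlinarith [hy 0, hy 3]
  exact ⟨by linarith, by linarith, h3⟩

lemma eq_of_coord_zero_eq {x y : Fin 4 → ℝ} (hy : ∀ i, 0 < y i)
    (hS : x 1 - y 1 = -(x 0 - y 0) ∧ x 3 - y 3 = -(x 2 - y 2))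
    (hratio : (x 0)⁻¹ * x 3 = (y 0)⁻¹ * y 3) (h0 : x 0 = y 0) : x = y := by
  have h3 : x 3 = y 3 := by
    rw [h0] at hratio
    exact mul_left_cancel₀ (inv_ne_zero (hy 0).ne') hratio
  ext i
  fin_cases i <;> simp only [Fin.zero_eta, Fin.mk_one, Fin.reduceFinMk] <;> linarith [hS.1, hS.2]

theorem stmt_14 (η : Fin 3 → ℝ) (hη : ∀ j, 0 < η j) :
    ∀ x y : Fin 4 → ℝ, (∀ i, 0 < x i) → (∀ i, 0 < y i) → x ≠ y →
      x - y ∈ Submodule.span ℝ ({![(1:ℝ), -1, 0, 0], ![0, 0, 1, -1]} :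
        Set (Fin 4 → ℝ)) →
      ¬ (η 0 * (x 0)⁻¹ * x 3 = η 0 * (y 0)⁻¹ * y 3 ∧
         η 1 * x 0 * (x 1)⁻¹ * (x 2)⁻¹ * x 3 + η 2 * (x 2)⁻¹ * x 3 =
           η 1 * y 0 * (y 1)⁻¹ * (y 2)⁻¹ * y 3 + η 2 * (y 2)⁻¹ * y 3) := by
  rintro x y hx hy hne hmem ⟨hfst, hsnd⟩
  have hS : x 1 - y 1 = -(x 0 - y 0) ∧ x 3 - y 3 = -(x 2 - y 2) := by
    simpa using (mem_span_balanced_pairs_iff _).1 hmem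
  have hS' : y 1 - x 1 = -(y 0 - x 0) ∧ y 3 - x 3 = -(y 2 - x 2) := by
    constructor <;> linarith [hS.1, hS.2]
  have hratio : (x 0)⁻¹ * x 3 = (y 0)⁻¹ * y 3 := by
    simpa only [mul_assoc, mul_right_inj' (hη 0).ne'] using hfst
  change secondComponent η x = secondComponent η y at hsnd
  rcases lt_trichotomy (y 0) (x 0) with h0 | h0 | h0
  · obtain ⟨h1, h2, h3⟩ := sign_pattern_of_lt hx hy hS hratio h0
    exact (secondComponent_lt_of_signs hη hx hy h0 h1 h2 h3).ne' hsnd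
  · exact hne (eq_of_coord_zero_eq hy hS hratio h0.symm)
  · obtain ⟨h1, h2, h3⟩ := sign_pattern_of_lt hy hx hS' hratio.symm h0
    exact (secondComponent_lt_of_signs hη hy hx h0 h1 h2 h3).ne hsnd
end
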